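/- (Existence of charging thresholds) For every time t < T−1 there exist thresholds τ_t and δ_t in [0, (T−t−1)·v̄] with δ_t ≤ τ_t such that −π_t⁺ ∈ h_{t+1}(τ_t) and −π_t⁻ ∈ h_{t+1}(δ_t), where h_{t+1}(y) is the superdifferential of the concave expected value function V̄_{t+1}(y) := E[V_{t+1}(y, r_{t+1}, π_{t+1})] at y. -/

import Mathlib

open MeasureTheory Set

/-- NEM X payment for net consumption `z` with buy price `pp` and sell price `pm`. -/
noncomputable def NEMPayment (pp pm z : ℝ) : ℝ := pp * max z 0 - pm * max (-z) 0

/-- The superdifferential of a function `f : ℝ → ℝ` (viewed as a concave function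
on `[0, ∞)`) at a point `y`. -/
def superdiff (f : ℝ → ℝ) (y : ℝ) : Set ℝ :=
  {s | ∀ z, 0 ≤ z → f z ≤ f y + s * (z - y)}

/-- Data of the EV-charging / flexible-consumption dynamic program over horizon
`{0, …, T-1}` with `K` flexible loads, under NEM time-of-use prices. -/
structure EVModel (K T : ℕ) (Ω : Type) [MeasurableSpace Ω] where
  /-- underlying probability measure -/
  μ : Measure Ω
  prob : IsProbabilityMeasure μ
  /-- consumption upper bounds -/
  dbar : Fin K → ℝ
  dbar_pos : ∀ i, 0 < dbar i
  /-- device utility functions -/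
  U : Fin K → ℝ → ℝ
  U_strictConcave : ∀ i, StrictConcaveOn ℝ (Icc 0 (dbar i)) (U i)
  U_strictMono : ∀ i, StrictMonoOn (U i) (Icc 0 (dbar i))
  U_diff : ∀ i, ∀ x ∈ Icc 0 (dbar i), DifferentiableWithinAt ℝ (U i) (Icc 0 (dbar i)) x
  U_contDeriv : ∀ i, ContinuousOn (fun x => derivWithin (U i) (Icc 0 (dbar i)) x) (Icc 0 (dbar i))
  U_zero : ∀ i, U i 0 = 0
  /-- renewable processes -/
  r : ℕ → Ω → ℝ
  r_meas : ∀ t, Measurable (r t)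
  r_nonneg : ∀ t ω, 0 ≤ r t ω
  r_int : ∀ t, Integrable (r t) μ
  r_indep : ProbabilityTheory.iIndepFun r μ
  /-- time-of-use buy prices `π_t⁺` -/
  pip : ℕ → ℝ
  /-- time-of-use sell prices `π_t⁻` -/
  pim : ℕ → ℝ
  /-- maximal per-period EV charge -/
  vbar : ℝ
  vbar_pos : 0 < vbar
  /-- per-unit penalty for unmet EV demand at the horizon -/
  γ : ℝ
  /-- `π_off⁻ = min_t π_t⁻` -/
  pioff : ℝ
  pioff_le : ∀ t < T, pioff ≤ pim t
  pioff_attained : ∃ t < T, pioff = pim t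
  /-- assumption A1 -/
  A1 : ∀ t < T, 0 < pim t ∧ pim t ≤ pip t ∧ pip t < γ

namespace EVModel

variable {K T : ℕ} {Ω : Type} [MeasurableSpace Ω]

/-- Stage reward `g_t(x_t, v, d)`. -/
noncomputable def stage (M : EVModel K T Ω) (t : ℕ) (rt v : ℝ) (d : Fin K → ℝ) : ℝ :=
  ∑ i, M.U i (d i) - NEMPayment (M.pip t) (M.pim t) (v + ∑ i, d i - rt)

/-- Feasible decisions `(v, d)` given remaining demand `y`. -/
def feas (M : EVModel K T Ω) (y : ℝ) : Set (ℝ × (Fin K → ℝ)) :=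
  {p | p.1 ∈ Icc 0 (min M.vbar y) ∧ ∀ i, p.2 i ∈ Icc 0 (M.dbar i)}

/-- Value function indexed by `k = T - 1 - t`, the number of remaining periods after
the current one. -/
noncomputable def W (M : EVModel K T Ω) : ℕ → ℝ → ℝ → ℝ
  | 0 => fun y rt => sSup ((fun p : ℝ × (Fin K → ℝ) =>
      M.stage (T - 1) rt p.1 p.2 - M.γ * (y - p.1)) '' M.feas y)
  | (k + 1) => fun y rt => sSup ((fun p : ℝ × (Fin K → ℝ) =>
      M.stage (T - 2 - k) rt p.1 p.2 +
        ∫ ω, M.W k (y - p.1) (M.r (T - 1 - k) ω) ∂M.μ) '' M.feas y)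

/-- Value function `V_t(y, r_t)` (the price argument is determined by `t`). -/
noncomputable def V (M : EVModel K T Ω) (t : ℕ) (y rt : ℝ) : ℝ := M.W (T - 1 - t) y rt

/-- Expected value function `V̄_t(y) = E[V_t(y, r_t, π_t)]`. -/
noncomputable def Vbar (M : EVModel K T Ω) (t : ℕ) (y : ℝ) : ℝ := ∫ ω, M.V t y (M.r t ω) ∂M.μ

/-- Objective of the Bellman equation at time `t` in state `(y, rt)`. -/
noncomputable def bellObj (M : EVModel K T Ω) (t : ℕ) (y rt : ℝ) (p : ℝ × (Fin K → ℝ)) : ℝ :=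
  if t = T - 1 then M.stage t rt p.1 p.2 - M.γ * (y - p.1)
  else M.stage t rt p.1 p.2 + ∫ ω, M.V (t + 1) (y - p.1) (M.r (t + 1) ω) ∂M.μ

/-- `(v, d)` is an optimal solution of the Bellman equation at time `t`. -/
def IsBellmanOpt (M : EVModel K T Ω) (t : ℕ) (y rt : ℝ) (p : ℝ × (Fin K → ℝ)) : Prop :=
  p ∈ M.feas y ∧ ∀ q ∈ M.feas y, M.bellObj t y rt q ≤ M.bellObj t y rt p

/-- Superdifferential `h_t` of the concave expected value function `V̄_t`. -/
noncomputable def h (M : EVModel K T Ω) (t : ℕ) (y : ℝ) : Set ℝ := superdiff (M.Vbar t) y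

end EVModel

/-!
The expected value function `V̄_{t+1}` is Lipschitz on `[0, ∞)` and, beyond
`(T - t - 1) v̄`, affine with slope `-γ`: with that much demand left, every remaining period
charges at full rate and each extra unit is paid for by the terminal penalty. Both properties
are propagated backwards through the Bellman recursion, where the feasible charging sets move
Lipschitz-continuously in the remaining demand. For `π ≤ γ`, a maximiser over the compact
interval `[0, (T - t - 1) v̄]` of `y ↦ V̄_{t+1}(y) + π y` is then a global maximiser on
`[0, ∞)`, which says exactly that `-π` is a supergradient there. Comparing the two maximality
conditions for `π_t⁺ > π_t⁻` orders the thresholds.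
-/

open scoped NNReal

theorem csSup_image_le_csSup_image_add {α : Type*} {P Q : Set α} {f g : α → ℝ} {c : ℝ}
    (hP : P.Nonempty) (hg : BddAbove (g '' Q)) (h : ∀ p ∈ P, ∃ q ∈ Q, f p ≤ g q + c) :
    sSup (f '' P) ≤ sSup (g '' Q) + c := by
  refine csSup_le (hP.image f) ?_
  rintro _ ⟨p, hp, rfl⟩
  obtain ⟨q, hq, hpq⟩ := h p hp
  linarith [le_csSup hg (mem_image_of_mem g hq)]

theorem LipschitzWith.integrable_comp {Ω E F : Type*} [MeasurableSpace Ω] {μ : Measure Ω}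
    [IsFiniteMeasure μ] [NormedAddCommGroup E] [NormedAddCommGroup F] {g : E → F} {K : ℝ≥0}
    (hg : LipschitzWith K g) {X : Ω → E} (hX : Integrable X μ) :
    Integrable (fun ω => g (X ω)) μ := by
  refine ((hX.norm.const_mul K).add (integrable_const ‖g 0‖)).mono'
    (hg.continuous.comp_aestronglyMeasurable hX.1) (Filter.Eventually.of_forall fun ω => ?_)
  have h₁ := hg.norm_sub_le (X ω) 0
  have h₂ := norm_sub_norm_le (g (X ω)) (g 0)
  rw [sub_zero] at h₁
  simp only [Pi.add_apply]
  linarith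

theorem abs_NEMPayment_sub_le (pp pm z z' : ℝ) :
    |NEMPayment pp pm z - NEMPayment pp pm z'| ≤ (|pp| + |pm|) * |z - z'| := by
  have h₁ := abs_max_sub_max_le_abs z z' 0
  have h₂ := abs_max_sub_max_le_abs (-z) (-z') 0
  rw [neg_sub_neg, abs_sub_comm z'] at h₂
  calc |NEMPayment pp pm z - NEMPayment pp pm z'|
      = |pp * (max z 0 - max z' 0) - pm * (max (-z) 0 - max (-z') 0)| := by
        unfold NEMPayment; congr 1; ring
    _ ≤ |pp| * |max z 0 - max z' 0| + |pm| * |max (-z) 0 - max (-z') 0| := by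
        rw [← abs_mul, ← abs_mul]; exact abs_sub _ _
    _ ≤ (|pp| + |pm|) * |z - z'| := by
        nlinarith [abs_nonneg pp, abs_nonneg pm]

def TailAffine (γ c : ℝ) (f : ℝ → ℝ) : Prop :=
  ∀ y, c ≤ y → f y = f c - γ * (y - c)

section Superdifferential

variable {f : ℝ → ℝ}

theorem neg_mem_superdiff_iff {π x : ℝ} :
    -π ∈ superdiff f x ↔ ∀ z, 0 ≤ z → f z + π * z ≤ f x + π * x := by
  refine forall₂_congr fun z _ => ?_
  constructor <;> intro h <;> linarith

theorem le_of_neg_mem_superdiff {p q τ δ : ℝ} (hqp : q < p) (hτ : 0 ≤ τ) (hδ : 0 ≤ δ)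
    (hp : -p ∈ superdiff f τ) (hq : -q ∈ superdiff f δ) : δ ≤ τ := by
  have h₁ := hp δ hδ
  have h₂ := hq τ hτ
  by_contra! h
  nlinarith [mul_pos (sub_pos.2 hqp) (sub_pos.2 h)]

theorem TailAffine.exists_neg_mem_superdiff {γ c π : ℝ} (hf : TailAffine γ c f) (hc : 0 ≤ c)
    (hcont : ContinuousOn f (Icc 0 c)) (hπ : π ≤ γ) : ∃ τ ∈ Icc 0 c, -π ∈ superdiff f τ := by
  obtain ⟨τ, hτ, hmax⟩ := isCompact_Icc.exists_isMaxOn (f := fun z => f z + π * z)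
    (nonempty_Icc.2 hc) (hcont.add (continuousOn_const.mul continuousOn_id))
  rw [isMaxOn_iff] at hmax
  refine ⟨τ, hτ, neg_mem_superdiff_iff.2 fun z hz => ?_⟩
  rcases le_total z c with hzc | hcz
  · exact hmax z ⟨hz, hzc⟩
  · have hcτ := hmax c ⟨hc, le_rfl⟩
    rw [hf z hcz]
    nlinarith [mul_nonneg (sub_nonneg.2 hπ) (sub_nonneg.2 hcz)]

end Superdifferential

structure IsRegularValue (γ c : ℝ) (G : ℝ → ℝ → ℝ) : Prop where
  lipschitzWith_renewable : ∃ K : ℝ≥0, ∀ y, 0 ≤ y → LipschitzWith K (G y)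
  lipschitzOnWith_demand : ∃ L : ℝ≥0, ∀ rt, LipschitzOnWith L (G · rt) (Ici 0)
  tailAffine : ∀ rt, TailAffine γ c (G · rt)

namespace IsRegularValue

variable {Ω : Type*} [MeasurableSpace Ω] {μ : Measure Ω} {γ c : ℝ} {G : ℝ → ℝ → ℝ}
  {X : Ω → ℝ}

theorem integrable_comp [IsFiniteMeasure μ] (hG : IsRegularValue γ c G) (hX : Integrable X μ)
    {y : ℝ} (hy : 0 ≤ y) : Integrable (fun ω => G y (X ω)) μ :=
  let ⟨_, hK⟩ := hG.lipschitzWith_renewable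
  (hK y hy).integrable_comp hX

theorem lipschitzOnWith_integral [IsProbabilityMeasure μ] (hG : IsRegularValue γ c G)
    (hX : Integrable X μ) : ∃ L : ℝ≥0, LipschitzOnWith L (fun y => ∫ ω, G y (X ω) ∂μ) (Ici 0) := by
  obtain ⟨L, hL⟩ := hG.lipschitzOnWith_demand
  refine ⟨L, LipschitzOnWith.of_dist_le_mul fun y hy y' hy' => ?_⟩
  rw [dist_eq_norm, ← integral_sub (hG.integrable_comp hX hy) (hG.integrable_comp hX hy')]
  simpa using norm_integral_le_of_norm_le_const (μ := μ) <| Filter.Eventually.of_forall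
    fun ω => (dist_eq_norm _ _).symm.trans_le ((hL (X ω)).dist_le_mul y hy y' hy')

theorem tailAffine_integral [IsProbabilityMeasure μ] (hG : IsRegularValue γ c G)
    (hX : Integrable X μ) (hc : 0 ≤ c) : TailAffine γ c (fun y => ∫ ω, G y (X ω) ∂μ) := by
  intro y hy
  have h : (fun ω => G y (X ω)) = fun ω => G c (X ω) - γ * (y - c) :=
    funext fun ω => hG.tailAffine (X ω) y hy
  simp only [h]
  rw [integral_sub (hG.integrable_comp hX hc) (integrable_const _), integral_const,
    probReal_univ, one_smul]

end IsRegularValue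

namespace EVModel

variable {K T : ℕ} {Ω : Type} [MeasurableSpace Ω] (M : EVModel K T Ω)

noncomputable def priceLip (s : ℕ) : ℝ := |M.pip s| + |M.pim s|

theorem priceLip_nonneg (s : ℕ) : 0 ≤ M.priceLip s :=
  add_nonneg (abs_nonneg _) (abs_nonneg _)

theorem stage_le_stage_add (s : ℕ) (rt rt' v v' : ℝ) (d : Fin K → ℝ) :
    M.stage s rt v d ≤ M.stage s rt' v' d + M.priceLip s * (|v - v'| + |rt - rt'|) := by
  have hN := abs_NEMPayment_sub_le (M.pip s) (M.pim s) (v' + ∑ i, d i - rt') (v + ∑ i, d i - rt)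
  have hz : |v' + ∑ i, d i - rt' - (v + ∑ i, d i - rt)| ≤ |v - v'| + |rt - rt'| := by
    rw [show v' + ∑ i, d i - rt' - (v + ∑ i, d i - rt) = -(v - v') + (rt - rt') by ring,
      ← abs_neg (v - v')]
    exact abs_add_le _ _
  have := mul_le_mul_of_nonneg_left hz (M.priceLip_nonneg s)
  unfold stage priceLip at *
  linarith [le_abs_self (NEMPayment (M.pip s) (M.pim s) (v' + ∑ i, d i - rt') -
    NEMPayment (M.pip s) (M.pim s) (v + ∑ i, d i - rt))]

theorem stage_le {s : ℕ} {rt y : ℝ} {p : ℝ × (Fin K → ℝ)} (hp : p ∈ M.feas y) :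
    M.stage s rt p.1 p.2 ≤
      ∑ i, M.U i (M.dbar i) + M.priceLip s * (M.vbar + ∑ i, M.dbar i + |rt|) := by
  obtain ⟨⟨hv₀, hv⟩, hd⟩ := hp
  have hU : ∑ i, M.U i (p.2 i) ≤ ∑ i, M.U i (M.dbar i) := Finset.sum_le_sum fun i _ =>
    (M.U_strictMono i).monotoneOn (hd i) (right_mem_Icc.2 (M.dbar_pos i).le) (hd i).2
  have hd₀ : 0 ≤ ∑ i, p.2 i := Finset.sum_nonneg fun i _ => (hd i).1
  have hd₁ : ∑ i, p.2 i ≤ ∑ i, M.dbar i := Finset.sum_le_sum fun i _ => (hd i).2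
  have hz : |p.1 + ∑ i, p.2 i - rt| ≤ M.vbar + ∑ i, M.dbar i + |rt| := by
    have := abs_sub (p.1 + ∑ i, p.2 i) rt
    rw [abs_of_nonneg (add_nonneg hv₀ hd₀)] at this
    linarith [min_le_left M.vbar y]
  have hN := abs_NEMPayment_sub_le (M.pip s) (M.pim s) (p.1 + ∑ i, p.2 i - rt) 0
  rw [show NEMPayment (M.pip s) (M.pim s) 0 = 0 by simp [NEMPayment], sub_zero, sub_zero] at hN
  have := mul_le_mul_of_nonneg_left hz (M.priceLip_nonneg s)
  unfold stage priceLip at *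
  linarith [neg_abs_le (NEMPayment (M.pip s) (M.pim s) (p.1 + ∑ i, p.2 i - rt))]

theorem feas_nonempty {y : ℝ} (hy : 0 ≤ y) : (M.feas y).Nonempty :=
  ⟨(0, 0), ⟨le_rfl, le_min M.vbar_pos.le hy⟩, fun i => ⟨le_rfl, (M.dbar_pos i).le⟩⟩

theorem exists_mem_feas_near {y y' : ℝ} {p : ℝ × (Fin K → ℝ)} (hp : p ∈ M.feas y)
    (hy' : 0 ≤ y') : ∃ v', (v', p.2) ∈ M.feas y' ∧ |p.1 - v'| ≤ |y - y'| ∧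
      |y - p.1 - (y' - v')| ≤ |y - y'| := by
  obtain ⟨⟨hv₀, hv⟩, hd⟩ := hp
  have hvy : p.1 ≤ y := hv.trans (min_le_right _ _)
  refine ⟨min p.1 y', ⟨⟨le_min hv₀ hy', min_le_min_right _ (hv.trans (min_le_left _ _))⟩, hd⟩,
    ?_⟩
  rcases le_total p.1 y' with h | h
  · simp only [min_eq_left h, sub_self, abs_zero, abs_nonneg, true_and]
    exact (congrArg abs (by ring)).le
  · simp only [min_eq_right h]
    constructor <;> rw [abs_le] <;> constructor <;>
      linarith [le_abs_self (y - y'), neg_abs_le (y - y')]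

noncomputable def bellman (s : ℕ) (F : ℝ → ℝ) (y rt : ℝ) : ℝ :=
  sSup ((fun p : ℝ × (Fin K → ℝ) => M.stage s rt p.1 p.2 + F (y - p.1)) '' M.feas y)

theorem W_zero : M.W 0 = M.bellman (T - 1) fun z => -(M.γ * z) := by
  funext y rt
  simp only [W, bellman, sub_eq_add_neg]

theorem W_succ (k : ℕ) :
    M.W (k + 1) = M.bellman (T - 2 - k) fun z => ∫ ω, M.W k z (M.r (T - 1 - k) ω) ∂M.μ :=
  rfl

section Bellman

variable {M} {s : ℕ} {F : ℝ → ℝ} {L : ℝ≥0}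

theorem bddAbove_bellman_image (hF : LipschitzOnWith L F (Ici 0)) (y rt : ℝ) :
    BddAbove ((fun p : ℝ × (Fin K → ℝ) => M.stage s rt p.1 p.2 + F (y - p.1)) '' M.feas y) := by
  refine ⟨∑ i, M.U i (M.dbar i) + M.priceLip s * (M.vbar + ∑ i, M.dbar i + |rt|) + (F 0 + L * y),
    ?_⟩
  rintro _ ⟨p, hp, rfl⟩
  have hvy : p.1 ≤ y := hp.1.2.trans (min_le_right _ _)
  have hF' := hF.le_add_mul (sub_nonneg.2 hvy) (mem_Ici.2 le_rfl)
  rw [Real.dist_eq, sub_zero, abs_of_nonneg (sub_nonneg.2 hvy)] at hF'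
  have := mul_le_mul_of_nonneg_left (sub_le_self y hp.1.1) L.coe_nonneg
  exact add_le_add (M.stage_le hp) (by linarith)

theorem lipschitzWith_bellman (hF : LipschitzOnWith L F (Ici 0)) {y : ℝ} (hy : 0 ≤ y) :
    LipschitzWith (M.priceLip s).toNNReal (M.bellman s F y) :=
  LipschitzWith.of_le_add_mul' _ fun rt rt' =>
    csSup_image_le_csSup_image_add (M.feas_nonempty hy) (bddAbove_bellman_image hF y rt')
      fun p hp => ⟨p, hp, by
        have := M.stage_le_stage_add s rt rt' p.1 p.1 p.2
        rw [sub_self, abs_zero, zero_add] at this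
        rw [Real.dist_eq]
        linarith⟩

theorem lipschitzOnWith_bellman (hF : LipschitzOnWith L F (Ici 0)) (rt : ℝ) :
    LipschitzOnWith (M.priceLip s + L).toNNReal (M.bellman s F · rt) (Ici 0) := by
  refine LipschitzOnWith.of_le_add_mul' _ fun y hy y' hy' =>
    csSup_image_le_csSup_image_add (M.feas_nonempty hy) (bddAbove_bellman_image hF y' rt)
      fun p hp => ?_
  obtain ⟨v', hq, hv, hz⟩ := M.exists_mem_feas_near hp hy'
  have hF' := hF.le_add_mul (x := y - p.1) (sub_nonneg.2 (hp.1.2.trans (min_le_right _ _)))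
    (sub_nonneg.2 (hq.1.2.trans (min_le_right _ _)))
  have hst := M.stage_le_stage_add s rt rt p.1 v' p.2
  rw [sub_self, abs_zero, add_zero] at hst
  rw [Real.dist_eq] at hF' ⊢
  have h₁ := mul_le_mul_of_nonneg_left hv (M.priceLip_nonneg s)
  have h₂ := mul_le_mul_of_nonneg_left hz L.coe_nonneg
  exact ⟨_, hq, by linarith⟩

theorem tailAffine_bellman {γ c : ℝ} (hF : LipschitzOnWith L F (Ici 0)) (hFc : TailAffine γ c F)
    (hc : 0 ≤ c) (rt : ℝ) : TailAffine γ (c + M.vbar) (M.bellman s F · rt) := by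
  intro y hy
  have hc' : 0 ≤ c + M.vbar := add_nonneg hc M.vbar_pos.le
  have hfeas : M.feas y = M.feas (c + M.vbar) := by
    simp only [feas, min_eq_left (le_add_of_nonneg_left hc), min_eq_left
      ((le_add_of_nonneg_left hc).trans hy)]
  have hobj : ∀ p ∈ M.feas (c + M.vbar),
      M.stage s rt p.1 p.2 + F (y - p.1) =
        M.stage s rt p.1 p.2 + F (c + M.vbar - p.1) - γ * (y - (c + M.vbar)) := by
    intro p hp
    have hv : p.1 ≤ M.vbar := hp.1.2.trans (min_le_left _ _)
    rw [hFc _ (by linarith), hFc (c + M.vbar - p.1) (by linarith)]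
    ring
  apply le_antisymm
  · exact csSup_image_le_csSup_image_add (M.feas_nonempty (hc'.trans hy))
      (bddAbove_bellman_image hF _ rt)
      fun p hp => ⟨p, hfeas ▸ hp, by linarith [hobj p (hfeas ▸ hp)]⟩
  · have : M.bellman s F (c + M.vbar) rt ≤ M.bellman s F y rt + γ * (y - (c + M.vbar)) :=
      csSup_image_le_csSup_image_add (M.feas_nonempty hc') (bddAbove_bellman_image hF y rt)
        fun p hp => ⟨p, hfeas ▸ hp, by linarith [hobj p hp]⟩
    linarith

theorem isRegularValue_bellman {γ c : ℝ} (hF : LipschitzOnWith L F (Ici 0))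
    (hFc : TailAffine γ c F) (hc : 0 ≤ c) : IsRegularValue γ (c + M.vbar) (M.bellman s F) where
  lipschitzWith_renewable := ⟨_, fun _ hy => lipschitzWith_bellman hF hy⟩
  lipschitzOnWith_demand := ⟨_, lipschitzOnWith_bellman hF⟩
  tailAffine := tailAffine_bellman hF hFc hc

end Bellman

theorem isRegularValue_W (k : ℕ) : IsRegularValue M.γ ((k + 1) * M.vbar) (M.W k) := by
  have := M.prob
  induction k with
  | zero =>
    have hF : LipschitzWith ‖M.γ‖₊ fun z => -(M.γ * z) := (lipschitzWith_smul M.γ).neg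
    rw [W_zero, show (((0 : ℕ) : ℝ) + 1) * M.vbar = 0 + M.vbar by push_cast; ring]
    exact M.isRegularValue_bellman hF.lipschitzOnWith (fun y _ => by ring) le_rfl
  | succ k ih =>
    have hc : 0 ≤ ((k : ℝ) + 1) * M.vbar := mul_nonneg (by positivity) M.vbar_pos.le
    obtain ⟨L, hL⟩ := ih.lipschitzOnWith_integral (M.r_int (T - 1 - k))
    rw [W_succ, show (((k + 1 : ℕ) : ℝ) + 1) * M.vbar = ((k : ℝ) + 1) * M.vbar + M.vbar by
      push_cast; ring]
    exact M.isRegularValue_bellman hL (ih.tailAffine_integral (M.r_int _) hc) hc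

theorem exists_lipschitzOnWith_Vbar (t : ℕ) : ∃ L : ℝ≥0, LipschitzOnWith L (M.Vbar t) (Ici 0) :=
  have := M.prob
  (M.isRegularValue_W _).lipschitzOnWith_integral (M.r_int t)

theorem tailAffine_Vbar {t : ℕ} (ht : t < T) :
    TailAffine M.γ ((T - t : ℕ) * M.vbar) (M.Vbar t) := by
  have := M.prob
  rw [show ((T - t : ℕ) : ℝ) = ((T - 1 - t : ℕ) : ℝ) + 1 by norm_cast; omega]
  exact (M.isRegularValue_W _).tailAffine_integral (M.r_int t)
    (mul_nonneg (by positivity) M.vbar_pos.le)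

end EVModel

/-- **Existence of charging thresholds.**
For every `t < T - 1` there exist thresholds `τ_t, δ_t ∈ [0, (T - t - 1) v̄]` with
`δ_t ≤ τ_t`, `-π_t⁺ ∈ h_{t+1}(τ_t)` and `-π_t⁻ ∈ h_{t+1}(δ_t)`, where `h_{t+1}` is the
superdifferential of the concave expected value function `V̄_{t+1}`. -/
theorem exists_charging_thresholds (K T : ℕ) (Ω : Type) [MeasurableSpace Ω]
    (M : EVModel K T Ω) (t : ℕ) (ht : t < T - 1) :
    ∃ τ ∈ Set.Icc 0 (((T - t - 1 : ℕ) : ℝ) * M.vbar),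
      ∃ δ ∈ Set.Icc 0 (((T - t - 1 : ℕ) : ℝ) * M.vbar),
        δ ≤ τ ∧ -M.pip t ∈ M.h (t + 1) τ ∧ -M.pim t ∈ M.h (t + 1) δ := by
  obtain ⟨-, hpim_le, hpip_lt⟩ := M.A1 t (by omega)
  rw [Nat.sub_sub]
  set c : ℝ := ((T - (t + 1) : ℕ) : ℝ) * M.vbar
  have hc : 0 ≤ c := mul_nonneg (by positivity) M.vbar_pos.le
  obtain ⟨L, hL⟩ := M.exists_lipschitzOnWith_Vbar (t + 1)
  have hcont := (hL.mono (Icc_subset_Ici_self : Icc 0 c ⊆ Ici 0)).continuousOn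
  have htail := M.tailAffine_Vbar (t := t + 1) (by omega)
  obtain ⟨τ, hτ, hτh⟩ := htail.exists_neg_mem_superdiff hc hcont hpip_lt.le
  obtain ⟨δ, hδ, hδh⟩ := htail.exists_neg_mem_superdiff hc hcont (hpim_le.trans hpip_lt.le)
  rcases hpim_le.eq_or_lt with heq | hlt
  · exact ⟨τ, hτ, τ, hτ, le_rfl, hτh, heq ▸ hτh⟩
  · exact ⟨τ, hτ, δ, hδ, le_of_neg_mem_superdiff hlt hτ.1 hδ.1 hτh hδh, hτh, hδh⟩
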